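/- Given a dimension function h with h ≺ x, there exists a compact set E ⊆ ℝ with ℋ^h(E) > 0 that contains no nontrivial arithmetic progression of length 3, i.e. there are no distinct x, y, z ∈ E with x + z = 2y. -/

import Mathlib

open MeasureTheory Filter Set

/-- A dimension function: vanishes at 0, positive on positives, increasing,
right-continuous. -/
def IsDimFun (h : ℝ → ℝ) : Prop :=
  h 0 = 0 ∧ (∀ t > 0, 0 < h t) ∧ MonotoneOn h (Set.Ici 0) ∧
    ∀ t ∈ Set.Ici (0 : ℝ), ContinuousWithinAt h (Set.Ici t) t

/-- The Hausdorff measure associated to a gauge (dimension) function `h`. -/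
noncomputable def gaugeMeasure {X : Type*} [EMetricSpace X] [MeasurableSpace X]
    [BorelSpace X] (h : ℝ → ℝ) : Measure X :=
  Measure.mkMetric fun r => ENNReal.ofReal (h r.toReal)

/-- `Prec h₂ h₁` means `h₂ ≺ h₁`, i.e. `lim_{x→0⁺} h₁ x / h₂ x = 0`. -/
def Prec (h₂ h₁ : ℝ → ℝ) : Prop :=
  Tendsto (fun x => h₁ x / h₂ x) (nhdsWithin 0 (Set.Ioi 0)) (nhds 0)

/-!
`E` is a Cantor-type set coded by `ω : ∀ k, Fin (c k + 1)`. The level-`n` interval of `ω` has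
length `δ n` and sits at `4 δ n * index n ω`; its children have indices `16 (c n + 1) i + d` with
`d = 4 ω n + r`, `r ∈ {0, 1}`. Since each level is a grid of spacing `4 δ n`, `x + z = 2 y` in `E`
forces `i_x + i_z = 2 i_y` for the level-`n` indices, at every level. A schedule runs through all
finite code prefixes; when the prefix that separates `x` from `y` comes up, the digit of `x`
gets `r = 0` and that of `y` gets `r = 1`, so `i_x + i_z ∈ {0, 1}` and `2 i_y ≡ 2` modulo 4.

For the measure, push the uniform product measure forward to `E`: an interval of length
`t ∈ (δ (n+1), δ n]` meets `O(t / δ (n+1))` intervals of level `n + 1`, each of mass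
`16 ^ (n+1) δ (n+1) / δ 0`, so its mass is `O(16 ^ n t) = O(h t)` once `δ n` is so small that
`h ≥ 16 ^ n · id` on `(0, δ n]`, which `h ≺ x` allows. The mass distribution principle concludes.
-/

open scoped ENNReal

lemma Int.card_Icc_ceil_floor_le {x y : ℝ} (h : y ≤ x + 1) :
    ((Finset.Icc ⌈y⌉ ⌊x⌋).card : ℝ) ≤ x - y + 1 := by
  have hx := Int.floor_le x
  have hy := Int.le_ceil y
  rw [Int.card_Icc]
  rcases le_or_gt 0 (⌊x⌋ + 1 - ⌈y⌉) with h0 | h0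
  · rw [← Int.cast_natCast, Int.toNat_of_nonneg h0]; push_cast; linarith
  · rw [Int.toNat_of_nonpos h0.le]; push_cast; linarith

lemma Prec.exists_mul_le {h : ℝ → ℝ} (hprec : Prec h fun x => x) (hpos : ∀ t > 0, 0 < h t)
    {M : ℝ} (hM : 0 < M) : ∃ t₀ > 0, ∀ t, 0 < t → t ≤ t₀ → M * t ≤ h t := by
  obtain ⟨t₀, ht₀, hsub⟩ :=
    mem_nhdsGT_iff_exists_Ioc_subset.1 (hprec (Iio_mem_nhds (inv_pos.2 hM)))
  refine ⟨t₀, ht₀, fun t ht htt₀ => ?_⟩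
  have : t / h t < M⁻¹ := hsub ⟨ht, htt₀⟩
  rw [div_lt_iff₀ (hpos t ht), ← div_eq_inv_mul, lt_div_iff₀ hM] at this
  linarith

namespace APFreeCantor

abbrev Code (c : ℕ → ℕ) : Type := ∀ k, Fin (c k + 1)

variable {c : ℕ → ℕ}

def codePrefix (ω : Code c) (n : ℕ) : List ℕ := List.ofFn fun i : Fin n => (ω i : ℕ)

lemma codePrefix_isPrefix_iff {ω ω' : Code c} {m n : ℕ} :
    codePrefix ω m <+: codePrefix ω' n ↔ m ≤ n ∧ ∀ i < m, ω i = ω' i := by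
  simp only [List.prefix_iff_getElem, codePrefix, List.length_ofFn, List.getElem_ofFn, Fin.val_inj,
    exists_prop]

lemma codePrefix_eq_of_mem_cylinder {ω ω' : Code c} {n : ℕ} (h : ω' ∈ PiNat.cylinder ω n) :
    codePrefix ω' n = codePrefix ω n :=
  congrArg List.ofFn (funext fun i => by rw [h i i.2])

def scheduled (k : ℕ) : List ℕ := Denumerable.ofNat (List ℕ) k.unpair.1

lemma exists_scheduled (X : List ℕ) : ∃ k, X.length ≤ k ∧ scheduled k = X :=
  ⟨Nat.pair (Encodable.encode X) X.length, Nat.right_le_pair _ _, by simp [scheduled]⟩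

def residue (k : ℕ) (ω : Code c) : ℕ := if scheduled k <+: codePrefix ω k then 0 else 1

lemma residue_le_one (k : ℕ) (ω : Code c) : residue k ω ≤ 1 := by
  unfold residue; split_ifs <;> simp

def digit (k : ℕ) (ω : Code c) : ℕ := 4 * ω k + residue k ω

lemma digit_lt (k : ℕ) (ω : Code c) : digit k ω < 4 * (c k + 1) := by
  have := (ω k).isLt; have := residue_le_one k ω; unfold digit; omega

def index : ℕ → Code c → ℕ
  | 0, _ => 0
  | n + 1, ω => index n ω * (16 * (c n + 1)) + digit n ω

lemma index_succ_mod_four (k : ℕ) (ω : Code c) : index (k + 1) ω % 4 = residue k ω := by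
  have := residue_le_one k ω
  rw [index, digit, show index k ω * (16 * (c k + 1)) + (4 * ω k + residue k ω) =
    4 * (index k ω * (4 * (c k + 1)) + ω k) + residue k ω by ring]
  omega

lemma index_eq_of_mem_cylinder {ω ω' : Code c} :
    ∀ {n}, ω' ∈ PiNat.cylinder ω n → index n ω' = index n ω
  | 0, _ => rfl
  | n + 1, h => by
    have hn : ω' ∈ PiNat.cylinder ω n := PiNat.cylinder_anti ω n.le_succ h
    simp only [index, digit, residue, index_eq_of_mem_cylinder hn, codePrefix_eq_of_mem_cylinder hn,
      h n n.lt_succ_self]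

lemma mem_cylinder_of_index_eq {ω ω' : Code c} :
    ∀ {n}, index n ω' = index n ω → ω' ∈ PiNat.cylinder ω n
  | 0, _ => by simp [PiNat.cylinder]
  | n + 1, h => by
    have hd := digit_lt n ω; have hd' := digit_lt n ω'
    simp only [index] at h
    have hdig : digit n ω' = digit n ω := by
      have := congrArg (· % (16 * (c n + 1))) h
      simp only [Nat.mul_add_mod_self_right] at this
      rwa [Nat.mod_eq_of_lt (by omega), Nat.mod_eq_of_lt (by omega)] at this
    have hind : index n ω' = index n ω := by
      rw [hdig] at h; exact Nat.eq_of_mul_eq_mul_right (by omega) (Nat.add_right_cancel h)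
    have hω : ω' n = ω n := by
      have := residue_le_one n ω; have := residue_le_one n ω'
      unfold digit at hdig; apply Fin.ext; omega
    intro i hi
    rcases Nat.lt_succ_iff_lt_or_eq.1 hi with hi | rfl
    · exact mem_cylinder_of_index_eq hind i hi
    · exact hω

def cylinderCount (c : ℕ → ℕ) (n : ℕ) : ℕ := ∏ i ∈ Finset.range n, (c i + 1)

lemma cylinderCount_pos (c : ℕ → ℕ) (n : ℕ) : 0 < cylinderCount c n :=
  Finset.prod_pos fun _ _ => Nat.succ_pos _

/-- The `4 (c k + 1)` digit slots of spacing `4 δ (k + 1)` exactly fill a level-`k` interval. -/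
structure IsScale (c : ℕ → ℕ) (δ : ℕ → ℝ) : Prop where
  pos_zero : 0 < δ 0
  eq_mul_succ : ∀ k, δ k = 16 * (c k + 1) * δ (k + 1)

namespace IsScale

variable {δ : ℕ → ℝ} (hδ : IsScale c δ)
include hδ

lemma mul_cylinderCount (n : ℕ) : δ n * (16 ^ n * cylinderCount c n) = δ 0 := by
  induction n with
  | zero => simp [cylinderCount]
  | succ n ih =>
    rw [← ih, hδ.eq_mul_succ n, cylinderCount, Finset.prod_range_succ, ← cylinderCount, pow_succ]
    push_cast
    ring

lemma pos (n : ℕ) : 0 < δ n := by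
  have := hδ.mul_cylinderCount n
  have : 0 < 16 ^ n * (cylinderCount c n : ℝ) := by
    have := cylinderCount_pos c n; positivity
  exact pos_of_mul_pos_left (by linarith [hδ.pos_zero]) this.le

lemma le_div_pow (n : ℕ) : δ n ≤ δ 0 / 16 ^ n := by
  have hP : 1 ≤ (cylinderCount c n : ℝ) := by exact_mod_cast cylinderCount_pos c n
  rw [le_div_iff₀ (by positivity), ← hδ.mul_cylinderCount n]
  exact mul_le_mul_of_nonneg_left (le_mul_of_one_le_right (by positivity) hP) (hδ.pos n).le

lemma tendsto_atTop : Tendsto δ atTop (nhds 0) := by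
  refine squeeze_zero (fun n => (hδ.pos n).le) hδ.le_div_pow ?_
  simpa [div_eq_mul_inv] using
    (tendsto_pow_atTop_nhds_zero_of_lt_one (by norm_num : (0 : ℝ) ≤ 1 / 16) (by norm_num)).const_mul
      (δ 0)

lemma exists_level {r : ℝ} (hr : 0 < r) (hr₀ : r ≤ δ 0) : ∃ n, δ (n + 1) < r ∧ r ≤ δ n := by
  classical
  have hex : ∃ n, δ n < r := (hδ.tendsto_atTop.eventually (gt_mem_nhds hr)).exists
  obtain ⟨n, hn⟩ : ∃ n, Nat.find hex = n + 1 :=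
    Nat.exists_eq_add_one_of_ne_zero fun h0 => by
      have := Nat.find_spec hex; rw [h0] at this; linarith
  exact ⟨n, hn ▸ Nat.find_spec hex, not_lt.1 (Nat.find_min hex (by omega))⟩

end IsScale

def leftEnd (δ : ℕ → ℝ) (n : ℕ) (ω : Code c) : ℝ := 4 * δ n * index n ω

variable {δ : ℕ → ℝ}

lemma leftEnd_succ (hδ : IsScale c δ) (n : ℕ) (ω : Code c) :
    leftEnd δ (n + 1) ω = leftEnd δ n ω + 4 * δ (n + 1) * digit n ω := by
  simp only [leftEnd, index]
  push_cast
  rw [hδ.eq_mul_succ n]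
  ring

lemma monotone_leftEnd (hδ : IsScale c δ) (ω : Code c) : Monotone fun n => leftEnd δ n ω :=
  monotone_nat_of_le_succ fun n => by
    rw [leftEnd_succ hδ]; exact le_add_of_nonneg_right (by have := hδ.pos (n + 1); positivity)

lemma antitone_leftEnd_add (hδ : IsScale c δ) (ω : Code c) :
    Antitone fun n => leftEnd δ n ω + δ n :=
  antitone_nat_of_succ_le fun n => by
    have hd : (digit n ω : ℝ) + 1 ≤ 4 * (c n + 1) := by exact_mod_cast digit_lt n ω
    rw [leftEnd_succ hδ, hδ.eq_mul_succ n]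
    nlinarith [hδ.pos (n + 1)]

noncomputable def point (δ : ℕ → ℝ) (ω : Code c) : ℝ := ⨆ n, leftEnd δ n ω

lemma point_mem_Icc (hδ : IsScale c δ) (ω : Code c) (n : ℕ) :
    point δ ω ∈ Icc (leftEnd δ n ω) (leftEnd δ n ω + δ n) := by
  have hle : ∀ m, leftEnd δ m ω ≤ leftEnd δ n ω + δ n := fun m =>
    calc leftEnd δ m ω ≤ leftEnd δ (max m n) ω := monotone_leftEnd hδ ω (le_max_left m n)
      _ ≤ leftEnd δ (max m n) ω + δ (max m n) := le_add_of_nonneg_right (hδ.pos _).le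
      _ ≤ leftEnd δ n ω + δ n := antitone_leftEnd_add hδ ω (le_max_right m n)
  exact ⟨le_ciSup ⟨_, forall_mem_range.2 hle⟩ n, ciSup_le hle⟩

lemma abs_point_sub_le (hδ : IsScale c δ) {ω ω' : Code c} {n : ℕ}
    (hω' : ω' ∈ PiNat.cylinder ω n) : |point δ ω' - point δ ω| ≤ δ n := by
  have hx' := point_mem_Icc hδ ω' n
  have hx := point_mem_Icc hδ ω n
  rw [leftEnd, index_eq_of_mem_cylinder hω'] at hx'
  rw [leftEnd] at hx
  exact abs_sub_le_iff.2 ⟨by linarith [hx'.2, hx.1], by linarith [hx'.1, hx.2]⟩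

lemma continuous_point (hδ : IsScale c δ) : Continuous (point δ : Code c → ℝ) := by
  refine continuous_iff_continuousAt.2 fun ω => Metric.tendsto_nhds.2 fun ε hε => ?_
  obtain ⟨n, hn⟩ := (hδ.tendsto_atTop.eventually (gt_mem_nhds hε)).exists
  filter_upwards [(PiNat.isOpen_cylinder _ ω n).mem_nhds (PiNat.self_mem_cylinder ω n)] with ω' h
  exact (abs_point_sub_le hδ h).trans_lt hn

lemma index_add_eq_of_point_add (hδ : IsScale c δ) {ω₁ ω₂ ω₃ : Code c}
    (h : point δ ω₁ + point δ ω₃ = 2 * point δ ω₂) (n : ℕ) :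
    index n ω₁ + index n ω₃ = 2 * index n ω₂ := by
  have h₁ := point_mem_Icc hδ ω₁ n
  have h₂ := point_mem_Icc hδ ω₂ n
  have h₃ := point_mem_Icc hδ ω₃ n
  simp only [leftEnd, mem_Icc] at h₁ h₂ h₃
  have hδn := hδ.pos n
  -- `4 δ n D` is within `2 δ n` of `x + z - 2 y = 0`, so `|D| < 1`.
  set D : ℤ := index n ω₁ + index n ω₃ - 2 * index n ω₂ with hD
  have hDδ : (D : ℝ) * (4 * δ n) = 4 * δ n * index n ω₁ + 4 * δ n * index n ω₃ -
      2 * (4 * δ n * index n ω₂) := by rw [hD]; push_cast; ring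
  have hlt : D < 1 := by
    have : (D : ℝ) * (4 * δ n) < 1 * (4 * δ n) := by linarith
    exact_mod_cast lt_of_mul_lt_mul_right this (by positivity)
  have hgt : -1 < D := by
    have : (-1 : ℝ) * (4 * δ n) < D * (4 * δ n) := by linarith
    exact_mod_cast lt_of_mul_lt_mul_right this (by positivity)
  omega

theorem point_add_ne (hδ : IsScale c δ) {ω₁ ω₂ ω₃ : Code c} (h : point δ ω₁ ≠ point δ ω₂) :
    point δ ω₁ + point δ ω₃ ≠ 2 * point δ ω₂ := by
  intro hap
  obtain ⟨m, hm⟩ : ∃ m, ω₁ m ≠ ω₂ m := Function.ne_iff.1 fun h' => h (h' ▸ rfl)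
  obtain ⟨k, hk, hX⟩ := exists_scheduled (codePrefix ω₁ (m + 1))
  have hk' : m + 1 ≤ k := by simpa [codePrefix] using hk
  have r₁ : residue k ω₁ = 0 :=
    if_pos (hX ▸ codePrefix_isPrefix_iff.2 ⟨hk', fun _ _ => rfl⟩)
  have r₂ : residue k ω₂ = 1 :=
    if_neg (hX ▸ fun h' => hm ((codePrefix_isPrefix_iff.1 h').2 m m.lt_succ_self))
  have r₃ := residue_le_one k ω₃
  have := index_add_eq_of_point_add hδ hap (k + 1)
  have := index_succ_mod_four k ω₁
  have := index_succ_mod_four k ω₂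
  have := index_succ_mod_four k ω₃
  omega

noncomputable def codeMeasure (c : ℕ → ℕ) : Measure (Code c) :=
  Measure.infinitePi fun k => (PMF.uniformOfFintype (Fin (c k + 1))).toMeasure

instance : IsProbabilityMeasure (codeMeasure c) := by
  unfold codeMeasure; infer_instance

lemma codeMeasure_cylinder (ω : Code c) (n : ℕ) :
    codeMeasure c (PiNat.cylinder ω n) = (cylinderCount c n : ℝ≥0∞)⁻¹ := by
  rw [PiNat.cylinder_eq_pi, codeMeasure,
    Measure.infinitePi_pi _ fun i _ => measurableSet_singleton _]
  simp only [PMF.toMeasure_apply_singleton _ _ (measurableSet_singleton _),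
    PMF.uniformOfFintype_apply, Fintype.card_fin, cylinderCount]
  push_cast
  exact (ENNReal.prod_inv_distrib fun _ _ _ _ _ => Or.inr (by simp)).symm

lemma codeMeasure_index_eq_le (n : ℕ) (v : ℤ) :
    codeMeasure c {ω | (index n ω : ℤ) = v} ≤ (cylinderCount c n : ℝ≥0∞)⁻¹ := by
  rcases eq_empty_or_nonempty {ω : Code c | (index n ω : ℤ) = v} with he | ⟨ω, hω⟩
  · simp [he]
  have : {ω' : Code c | (index n ω' : ℤ) = v} = PiNat.cylinder ω n := by
    ext ω'
    refine ⟨fun h => mem_cylinder_of_index_eq ?_, fun h => ?_⟩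
    · exact_mod_cast h.trans (Eq.symm hω)
    · simpa [index_eq_of_mem_cylinder h] using hω
  rw [this, codeMeasure_cylinder]

lemma preimage_Icc_subset (hδ : IsScale c δ) (n : ℕ) (a b : ℝ) :
    (point δ : Code c → ℝ) ⁻¹' Icc a b ⊆ ⋃ v ∈ Finset.Icc ⌈(a - δ n) / (4 * δ n)⌉ ⌊b / (4 * δ n)⌋,
      {ω | (index n ω : ℤ) = v} := by
  intro ω hω
  have hp := point_mem_Icc hδ ω n
  have hδn := hδ.pos n
  simp only [leftEnd, mem_preimage, mem_Icc] at hω hp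
  refine mem_iUnion₂.2 ⟨index n ω, Finset.mem_Icc.2 ⟨Int.ceil_le.2 ?_, Int.le_floor.2 ?_⟩, rfl⟩
  · rw [div_le_iff₀ (by positivity)]; push_cast; linarith
  · rw [le_div_iff₀ (by positivity)]; push_cast; linarith

lemma codeMeasure_preimage_Icc_le (hδ : IsScale c δ) (n : ℕ) {a b : ℝ} (hab : a ≤ b) :
    codeMeasure c (point δ ⁻¹' Icc a b) ≤
      ENNReal.ofReal (((b - a) / (4 * δ n) + 5 / 4) / cylinderCount c n) := by
  have hδn := hδ.pos n
  have hcard := Int.card_Icc_ceil_floor_le (x := b / (4 * δ n)) (y := (a - δ n) / (4 * δ n))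
    (by rw [← sub_nonneg]; field_simp; linarith)
  calc codeMeasure c (point δ ⁻¹' Icc a b)
      ≤ ∑ v ∈ Finset.Icc ⌈(a - δ n) / (4 * δ n)⌉ ⌊b / (4 * δ n)⌋,
          codeMeasure c {ω | (index n ω : ℤ) = v} :=
        (measure_mono (preimage_Icc_subset hδ n a b)).trans (measure_biUnion_finset_le _ _)
    _ ≤ _ := Finset.sum_le_card_nsmul _ _ _ fun v _ => codeMeasure_index_eq_le n v
    _ = _ := by
      rw [nsmul_eq_mul, ← div_eq_mul_inv, ← ENNReal.ofReal_natCast, ← ENNReal.ofReal_natCast,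
        ← ENNReal.ofReal_div_of_pos (by exact_mod_cast cylinderCount_pos c n)]
    _ ≤ _ := by
      gcongr
      exact hcard.trans_eq (by field_simp; ring)

variable {h : ℝ → ℝ}

lemma codeMeasure_preimage_Icc_le_gauge (hδ : IsScale c δ)
    (hh : ∀ n t, 0 < t → t ≤ δ n → 16 ^ n * t ≤ h t) {a b : ℝ} (hab : 0 < b - a)
    (hba : b - a ≤ δ 0) :
    codeMeasure c (point δ ⁻¹' Icc a b) ≤ ENNReal.ofReal (36 / δ 0 * h (b - a)) := by
  obtain ⟨n, hlt, hle⟩ := hδ.exists_level hab hba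
  have hδn := hδ.pos (n + 1)
  have hN : (0 : ℝ) < cylinderCount c (n + 1) := by exact_mod_cast cylinderCount_pos c (n + 1)
  have hscale := hδ.mul_cylinderCount (n + 1)
  refine (codeMeasure_preimage_Icc_le hδ (n + 1) (by linarith)).trans (ENNReal.ofReal_le_ofReal ?_)
  calc ((b - a) / (4 * δ (n + 1)) + 5 / 4) / cylinderCount c (n + 1)
      ≤ 9 * (b - a) / (4 * δ (n + 1)) / cylinderCount c (n + 1) := by
        gcongr
        rw [div_add' _ _ _ (by positivity), div_le_div_iff_of_pos_right (by positivity)]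
        linarith
    _ = 36 / δ 0 * (16 ^ n * (b - a)) := by
        rw [← hscale]
        field_simp
        ring
    _ ≤ 36 / δ 0 * h (b - a) := by
        have := hδ.pos_zero
        gcongr
        exact hh n _ hab hle

lemma codeMeasure_preimage_le_of_subset_Icc (hδ : IsScale c δ)
    (hcont : ContinuousWithinAt h (Ici 0) 0)
    (hh : ∀ n t, 0 < t → t ≤ δ n → 16 ^ n * t ≤ h t) {s : Set ℝ} {a b : ℝ} (hs : s ⊆ Icc a b)
    (hab : a ≤ b) (hba : b - a ≤ δ 0) :
    codeMeasure c (point δ ⁻¹' s) ≤ ENNReal.ofReal (36 / δ 0 * h (b - a)) := by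
  rcases hab.lt_or_eq with hlt | rfl
  · exact (measure_mono (preimage_mono hs)).trans
      (codeMeasure_preimage_Icc_le_gauge hδ hh (sub_pos.2 hlt) hba)
  have hlim : Tendsto (fun t => ENNReal.ofReal (36 / δ 0 * h t)) (nhdsWithin 0 (Ioi 0))
      (nhds (ENNReal.ofReal (36 / δ 0 * h (a - a)))) := by
    rw [sub_self]
    exact ENNReal.tendsto_ofReal
      ((hcont.mono Ioi_subset_Ici_self).tendsto.const_mul (36 / δ 0))
  refine ge_of_tendsto hlim ?_
  filter_upwards [Ioc_mem_nhdsGT hδ.pos_zero] with t ht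
  refine (measure_mono (preimage_mono (hs.trans (Icc_subset_Icc_right (le_add_of_nonneg_right
    ht.1.le))))).trans ?_
  simpa using codeMeasure_preimage_Icc_le_gauge hδ hh (a := a) (b := a + t) (by simpa using ht.1)
    (by simpa using ht.2)

lemma codeMeasure_preimage_le_ediam (hδ : IsScale c δ) (hcont : ContinuousWithinAt h (Ici 0) 0)
    (hh : ∀ n t, 0 < t → t ≤ δ n → 16 ^ n * t ≤ h t) {s : Set ℝ}
    (hs : Metric.ediam s ≤ ENNReal.ofReal (δ 0)) :
    codeMeasure c (point δ ⁻¹' s) ≤ ENNReal.ofReal (36 / δ 0 * h (Metric.ediam s).toReal) := by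
  rcases s.eq_empty_or_nonempty with rfl | hne
  · simp
  have hb : Bornology.IsBounded s :=
    Metric.isBounded_iff_ediam_ne_top.2 (ne_top_of_le_ne_top ENNReal.ofReal_ne_top hs)
  have hle : sInf s ≤ sSup s := csInf_le_csSup hne hb.bddBelow hb.bddAbove
  rw [Real.ediam_eq hb, ENNReal.ofReal_le_ofReal_iff hδ.pos_zero.le] at hs
  rw [Real.ediam_eq hb, ENNReal.toReal_ofReal (sub_nonneg.2 hle)]
  exact codeMeasure_preimage_le_of_subset_Icc hδ hcont hh hb.subset_Icc_sInf_sSup hle hs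

theorem gaugeMeasure_range_point_pos (hδ : IsScale c δ) (hcont : ContinuousWithinAt h (Ici 0) 0)
    (hh : ∀ n t, 0 < t → t ≤ δ n → 16 ^ n * t ≤ h t) :
    0 < gaugeMeasure h (range (point δ : Code c → ℝ)) := by
  -- mass distribution principle for the push-forward of `codeMeasure c`
  set μ : OuterMeasure ℝ :=
    ENNReal.ofReal (δ 0 / 36) • OuterMeasure.map (point δ) (codeMeasure c).toOuterMeasure
  have hμ : μ ≤ OuterMeasure.mkMetric fun r => ENNReal.ofReal (h r.toReal) := by
    refine OuterMeasure.le_mkMetric _ μ _ (ENNReal.ofReal_pos.2 hδ.pos_zero) fun s hs => ?_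
    have hδ₀ := hδ.pos_zero
    calc μ s = ENNReal.ofReal (δ 0 / 36) * codeMeasure c (point δ ⁻¹' s) := rfl
      _ ≤ ENNReal.ofReal (δ 0 / 36) * ENNReal.ofReal (36 / δ 0 * h (Metric.ediam s).toReal) := by
        gcongr
        exact codeMeasure_preimage_le_ediam hδ hcont hh hs
      _ = ENNReal.ofReal (h (Metric.ediam s).toReal) := by
        rw [← ENNReal.ofReal_mul (by positivity)]
        congr 1
        field_simp
  calc 0 < ENNReal.ofReal (δ 0 / 36) := ENNReal.ofReal_pos.2 (by linarith [hδ.pos_zero])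
    _ = μ (range (point δ)) := by
      change _ = ENNReal.ofReal (δ 0 / 36) * codeMeasure c (point δ ⁻¹' range (point δ))
      rw [preimage_range, measure_univ, mul_one]
    _ ≤ gaugeMeasure h (range (point δ : Code c → ℝ)) := by
      rw [gaugeMeasure, ← OuterMeasure.coe_mkMetric]
      exact hμ _

lemma exists_isScale {t₀ : ℕ → ℝ} (ht₀ : ∀ k, 0 < t₀ k) :
    ∃ (c : ℕ → ℕ) (δ : ℕ → ℝ), IsScale c δ ∧ ∀ k, δ k ≤ t₀ k := by
  let δ : ℕ → ℝ := fun k => Nat.rec (t₀ 0) (fun k d => d / (16 * (⌈d / t₀ (k + 1)⌉₊ + 1))) k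
  let c : ℕ → ℕ := fun k => ⌈δ k / t₀ (k + 1)⌉₊
  have hsucc : ∀ k, δ (k + 1) = δ k / (16 * (c k + 1)) := fun k => rfl
  refine ⟨c, δ, ⟨ht₀ 0, fun k => by rw [hsucc]; field_simp⟩, fun k => ?_⟩
  cases k with
  | zero => exact le_rfl
  | succ k =>
    have hc := Nat.le_ceil (δ k / t₀ (k + 1))
    rw [div_le_iff₀ (ht₀ _)] at hc
    rw [hsucc, div_le_iff₀ (by positivity)]
    nlinarith [ht₀ (k + 1)]

end APFreeCantor

open APFreeCantor

theorem stmt_15 (h : ℝ → ℝ) (hdim : IsDimFun h) (hprec : Prec h (fun x : ℝ => x)) :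
    ∃ E : Set ℝ, IsCompact E ∧ 0 < gaugeMeasure h E ∧
      ∀ x ∈ E, ∀ y ∈ E, ∀ z ∈ E,
        x ≠ y → y ≠ z → x ≠ z → x + z ≠ 2 * y := by
  choose t₀ ht₀ hle using fun k : ℕ =>
    hprec.exists_mul_le hdim.2.1 (pow_pos (by norm_num : (0 : ℝ) < 16) k)
  obtain ⟨c, δ, hδ, hδt₀⟩ := exists_isScale ht₀
  refine ⟨range (point δ), isCompact_range (continuous_point hδ),
    gaugeMeasure_range_point_pos hδ (hdim.2.2.2 0 self_mem_Ici)
      fun n t ht htδ => hle n t ht (htδ.trans (hδt₀ n)), ?_⟩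
  rintro _ ⟨ω₁, rfl⟩ _ ⟨ω₂, rfl⟩ _ ⟨ω₃, rfl⟩ h₁₂ - -
  exact point_add_ne hδ h₁₂
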